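/- If π*(y) = π_ref(y)·exp(r(y)/β)/Z with Z the normalizing constant, then for every y with π_ref(y) > 0, r(y) = β·log(π*(y)/π_ref(y)) + β·log Z. In particular, for any two responses y₁, y₂, r(y₁) − r(y₂) = β·log(π*(y₁)/π_ref(y₁)) − β·log(π*(y₂)/π_ref(y₂)), so the partition function cancels from reward differences. -/

import Mathlib

open Finset

/-- DPO reparameterization: if `π*(y) = π_ref(y) exp(r(y)/β)/Z`, then
`r(y) = β log(π*(y)/π_ref(y)) + β log Z`, and the partition function cancels from
reward differences. -/
theorem dpo_reparameterization {Y : Type*} [Fintype Y] [Nonempty Y]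
    (πref : Y → ℝ) (hpos : ∀ y, 0 < πref y)
    (r : Y → ℝ) (β : ℝ) (hβ : 0 < β)
    (Z : ℝ) (hZ : Z = ∑ y, πref y * Real.exp (r y / β))
    (πstar : Y → ℝ) (hstar : ∀ y, πstar y = πref y * Real.exp (r y / β) / Z) :
    (∀ y, 0 < πref y → r y = β * Real.log (πstar y / πref y) + β * Real.log Z) ∧
    (∀ y₁ y₂, r y₁ - r y₂ =
        β * Real.log (πstar y₁ / πref y₁) - β * Real.log (πstar y₂ / πref y₂)) := by
  have hZpos : 0 < Z := by
    rw [hZ]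
    exact Finset.sum_pos (fun y _ => mul_pos (hpos y) (Real.exp_pos _))
      Finset.univ_nonempty
  have key : ∀ y, r y = β * Real.log (πstar y / πref y) + β * Real.log Z := by
    intro y
    have hratio : πstar y / πref y = Real.exp (r y / β) / Z := by
      rw [hstar y]
      rw [div_div, mul_comm Z (πref y), ← div_div,
        mul_div_cancel_left₀ _ (hpos y).ne']
    rw [hratio, Real.log_div (Real.exp_ne_zero _) hZpos.ne', Real.log_exp]
    field_simp
    ring
  exact ⟨fun y _ => key y, fun y₁ y₂ => by rw [key y₁, key y₂]; ring⟩
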